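/- (Theorem 1, strict contraction) Assume DᵀD = I_d (D is a unit tight frame). Suppose the ADMM optimality conditions hold at step k: (i) for all z ∈ Z, θ1(z) − θ1(z^{k+1}) + ⟨z − z^{k+1}, λ^k − β(Dx^k − z^{k+1})⟩ ≥ 0; (ii) for all x ∈ X, θ2(x) − θ2(x^{k+1}) + ⟨x − x^{k+1}, −Dᵀλ^k + βDᵀ(Dx^{k+1} − z^{k+1})⟩ ≥ 0; (iii) λ^{k+1} = λ^k − β(Dx^{k+1} − z^{k+1}); and additionally (iv) for all x ∈ X, θ2(x) − θ2(x^k) + ⟨x − x^k, −Dᵀλ^k⟩ ≥ 0. Suppose (z*, x*, λ*) ∈ Z × X × R^n satisfies the saddle-point conditions: for all z ∈ Z, θ1(z) − θ1(z*) + ⟨z − z*, λ*⟩ ≥ 0; for all x ∈ X, θ2(x) − θ2(x*) + ⟨x − x*, −Dᵀλ*⟩ ≥ 0; and Dx* = z*. Then, with ‖v‖_H² := (1/β)‖λ‖₂² + β‖x‖₂² for v = (λ, x) ∈ R^n × R^d, it holds that ‖v^{k+1} − v*‖_H² ≤ ‖v^k − v*‖_H² − ‖v^k − v^{k+1}‖_H²,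 where v^k = (λ^k, x^k), v^{k+1} = (λ^{k+1}, x^{k+1}), v* = (λ*, x*). -/

import Mathlib

open scoped RealInnerProductSpace

/-- Matrix-vector multiplication, landing in Euclidean space. -/
noncomputable def mulv {n d : ℕ} (A : Matrix (Fin n) (Fin d) ℝ)
    (x : EuclideanSpace ℝ (Fin d)) : EuclideanSpace ℝ (Fin n) := WithLp.toLp 2 (A.mulVec x)

/-- `θ₁(z) = ‖z‖₁`, the sum of absolute values of the entries of `z`. -/
noncomputable def theta1 {n : ℕ} (z : EuclideanSpace ℝ (Fin n)) : ℝ := ∑ i, |z i|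

/-- `θ₂(x) = (α/2)‖y − Mx‖₂²`. -/
noncomputable def theta2 {m d : ℕ} (M : Matrix (Fin m) (Fin d) ℝ)
    (y : EuclideanSpace ℝ (Fin m)) (α : ℝ) (x : EuclideanSpace ℝ (Fin d)) : ℝ :=
  α / 2 * ‖y - mulv M x‖ ^ 2


lemma mulv_sub {n d : ℕ} (A : Matrix (Fin n) (Fin d) ℝ) (a b : EuclideanSpace ℝ (Fin d)) :
    mulv A (a - b) = mulv A a - mulv A b := by
  ext i
  simp [mulv, Matrix.mulVec, dotProduct, mul_sub, Finset.sum_sub_distrib]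

lemma mulv_smul {n d : ℕ} (A : Matrix (Fin n) (Fin d) ℝ) (c : ℝ) (a : EuclideanSpace ℝ (Fin d)) :
    mulv A (c • a) = c • mulv A a := by
  ext i
  simp [mulv, Matrix.mulVec, dotProduct, Finset.mul_sum]
  congr 1; ext j; ring

lemma adj {n d : ℕ} (A : Matrix (Fin n) (Fin d) ℝ) (u : EuclideanSpace ℝ (Fin n))
    (x : EuclideanSpace ℝ (Fin d)) : ⟪mulv A.transpose u, x⟫ = ⟪u, mulv A x⟫ := by
  simp only [mulv, PiLp.inner_apply, RCLike.inner_apply, conj_trivial, Matrix.mulVec,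
    dotProduct, Matrix.transpose_apply, Finset.sum_mul, Finset.mul_sum]
  rw [Finset.sum_comm]
  congr 1; ext i; congr 1; ext j; ring

lemma mulv_tt {n d : ℕ} (A : Matrix (Fin n) (Fin d) ℝ) (hA : A.transpose * A = 1)
    (x : EuclideanSpace ℝ (Fin d)) : mulv A.transpose (mulv A x) = x := by
  rw [mulv, mulv, WithLp.ofLp_toLp, Matrix.mulVec_mulVec, hA, Matrix.one_mulVec, WithLp.toLp_ofLp]

/-- Theorem 1 (strict contraction): if `DᵀD = I`, the ADMM iterates satisfy
`‖v^{k+1} − v*‖_H² ≤ ‖v^k − v*‖_H² − ‖v^k − v^{k+1}‖_H²`, where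
`‖(λ, x)‖_H² = (1/β)‖λ‖₂² + β‖x‖₂²`. -/
theorem stmt_9 {n d m : ℕ} (D : Matrix (Fin n) (Fin d) ℝ) (M : Matrix (Fin m) (Fin d) ℝ)
    (y : EuclideanSpace ℝ (Fin m)) (α β : ℝ) (hα : 0 < α) (hβ : 0 < β)
    (Z : Set (EuclideanSpace ℝ (Fin n))) (X : Set (EuclideanSpace ℝ (Fin d)))
    (hZ : Convex ℝ Z) (hX : Convex ℝ X)
    (hnd : d ≤ n) (hD : D.transpose * D = 1)
    (zk zk1 : EuclideanSpace ℝ (Fin n)) (xk xk1 : EuclideanSpace ℝ (Fin d))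
    (lk lk1 : EuclideanSpace ℝ (Fin n))
    (hzkZ : zk ∈ Z) (hzk1Z : zk1 ∈ Z) (hxkX : xk ∈ X) (hxk1X : xk1 ∈ X)
    (h1 : ∀ z ∈ Z, theta1 z - theta1 zk1 +
      ⟪z - zk1, lk - β • (mulv D xk - zk1)⟫ ≥ 0)
    (h2 : ∀ x ∈ X, theta2 M y α x - theta2 M y α xk1 +
      ⟪x - xk1, -(mulv D.transpose lk) + β • mulv D.transpose (mulv D xk1 - zk1)⟫ ≥ 0)
    (h3 : lk1 = lk - β • (mulv D xk1 - zk1))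
    (h4 : ∀ x ∈ X, theta2 M y α x - theta2 M y α xk +
      ⟪x - xk, -(mulv D.transpose lk)⟫ ≥ 0)
    (zs : EuclideanSpace ℝ (Fin n)) (xs : EuclideanSpace ℝ (Fin d))
    (ls : EuclideanSpace ℝ (Fin n)) (hzs : zs ∈ Z) (hxs : xs ∈ X)
    (hs1 : ∀ z ∈ Z, theta1 z - theta1 zs + ⟪z - zs, ls⟫ ≥ 0)
    (hs2 : ∀ x ∈ X, theta2 M y α x - theta2 M y α xs + ⟪x - xs, -(mulv D.transpose ls)⟫ ≥ 0)
    (hs3 : mulv D xs = zs) :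
    (1 / β) * ‖lk1 - ls‖ ^ 2 + β * ‖xk1 - xs‖ ^ 2 ≤
      (1 / β) * ‖lk - ls‖ ^ 2 + β * ‖xk - xs‖ ^ 2 -
        ((1 / β) * ‖lk - lk1‖ ^ 2 + β * ‖xk - xk1‖ ^ 2) := by
  have hβ0 : β ≠ 0 := hβ.ne'
  have hq : lk - lk1 = β • (mulv D xk1 - zk1) := by rw [h3]; abel
  have hz : mulv D xk1 - zk1 = (1 / β) • (lk - lk1) := by
    rw [hq, smul_smul, one_div, inv_mul_cancel₀ hβ0, one_smul]
  have hsm : β • mulv D.transpose (mulv D xk1 - zk1) = mulv D.transpose (lk - lk1) := by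
    rw [hz, mulv_smul, smul_smul, mul_one_div, div_self hβ0, one_smul]
  -- Fact 3 : ⟪lk - lk1, D (xk - xk1)⟫ ≥ 0
  have f5 := h2 xk hxkX
  have f6 := h4 xk1 hxk1X
  have e3 : ⟪xk - xk1, -(mulv D.transpose lk) + β • mulv D.transpose (mulv D xk1 - zk1)⟫
      + ⟪xk1 - xk, -(mulv D.transpose lk)⟫ = ⟪lk - lk1, mulv D (xk - xk1)⟫ := by
    have c1 : (xk1 - xk : EuclideanSpace ℝ (Fin d)) = -(xk - xk1) := by abel
    rw [hsm, c1, ← adj, mulv_sub]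
    simp only [inner_add_right, inner_sub_right, inner_sub_left, inner_neg_left, inner_neg_right]
    linarith [real_inner_comm (mulv D.transpose lk) xk,
      real_inner_comm (mulv D.transpose lk) xk1,
      real_inner_comm (mulv D.transpose lk1) xk,
      real_inner_comm (mulv D.transpose lk1) xk1]
  have F3 : 0 ≤ ⟪lk - lk1, mulv D (xk - xk1)⟫ := by
    rw [← e3]; linarith
  -- Fact 2 : ⟪ls - lk1, D (xs - xk1)⟫ ≥ 0
  have f3 := h2 xs hxs
  have f4 := hs2 xk1 hxk1X
  have e2 : ⟪xs - xk1, -(mulv D.transpose lk) + β • mulv D.transpose (mulv D xk1 - zk1)⟫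
      + ⟪xk1 - xs, -(mulv D.transpose ls)⟫
      = ⟪ls - lk1, mulv D (xs - xk1)⟫ := by
    have c1 : (xk1 - xs : EuclideanSpace ℝ (Fin d)) = -(xs - xk1) := by abel
    rw [hsm, c1, ← adj, mulv_sub, mulv_sub]
    simp only [inner_add_right, inner_sub_right, inner_sub_left, inner_neg_left, inner_neg_right]
    linarith [real_inner_comm (mulv D.transpose lk) xs,
      real_inner_comm (mulv D.transpose lk) xk1,
      real_inner_comm (mulv D.transpose lk1) xs,
      real_inner_comm (mulv D.transpose lk1) xk1,
      real_inner_comm (mulv D.transpose ls) xs,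
      real_inner_comm (mulv D.transpose ls) xk1]
  have F2 : 0 ≤ ⟪ls - lk1, mulv D (xs - xk1)⟫ := by
    rw [← e2]; linarith
  -- Fact 1
  have f1 := h1 zs hzs
  have f2 := hs1 zk1 hzk1Z
  have hv1 : lk - β • (mulv D xk - zk1) = lk1 - β • mulv D (xk - xk1) := by
    rw [h3, mulv_sub]; module
  have F1 : 0 ≤ ⟪zs - zk1, lk1 - ls⟫ - β * ⟪zs - zk1, mulv D (xk - xk1)⟫ := by
    have c1 : (zk1 - zs : EuclideanSpace ℝ (Fin n)) = -(zs - zk1) := by abel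
    rw [c1, inner_neg_left] at f2
    rw [hv1] at f1
    have e1 : ⟪zs - zk1, lk1 - β • mulv D (xk - xk1)⟫
        = ⟪zs - zk1, lk1 - ls⟫ - β * ⟪zs - zk1, mulv D (xk - xk1)⟫ + ⟪zs - zk1, ls⟫ := by
      simp only [inner_sub_right, real_inner_smul_right]
      ring
    rw [e1] at f1
    linarith
  -- decomposition zs - zk1 = (D xs - D xk1) + (1/β)•(lk - lk1)
  have hdecomp : zs - zk1 = (mulv D xs - mulv D xk1) + (1 / β) • (lk - lk1) := by
    rw [← hs3, ← hz]; abel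
  have r1 : ⟪mulv D xs - mulv D xk1, lk1 - ls⟫ = -⟪ls - lk1, mulv D (xs - xk1)⟫ := by
    rw [mulv_sub, real_inner_comm]
    simp only [inner_sub_left, inner_sub_right]
    ring
  have r2 : ⟪mulv D xs - mulv D xk1, mulv D (xk - xk1)⟫ = ⟪xs - xk1, xk - xk1⟫ := by
    rw [← mulv_sub, ← adj, mulv_tt D hD]
  have r3 : ⟪lk - lk1, lk1 - ls⟫ = ⟪lk - ls, lk - lk1⟫ - ‖lk - lk1‖ ^ 2 := by
    rw [show lk1 - ls = (lk - ls) - (lk - lk1) by abel]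
    rw [inner_sub_right, real_inner_self_eq_norm_sq, real_inner_comm]
  have r4 : ⟪xs - xk1, xk - xk1⟫ = ‖xk - xk1‖ ^ 2 - ⟪xk - xs, xk - xk1⟫ := by
    rw [show xs - xk1 = (xk - xk1) - (xk - xs) by abel]
    rw [inner_sub_left, real_inner_self_eq_norm_sq]
  have exp : ⟪zs - zk1, lk1 - ls⟫ - β * ⟪zs - zk1, mulv D (xk - xk1)⟫
      = -⟪ls - lk1, mulv D (xs - xk1)⟫
        + (1 / β) * (⟪lk - ls, lk - lk1⟫ - ‖lk - lk1‖ ^ 2)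
        - β * (‖xk - xk1‖ ^ 2 - ⟪xk - xs, xk - xk1⟫)
        - ⟪lk - lk1, mulv D (xk - xk1)⟫ := by
    rw [hdecomp]
    simp only [inner_add_left, real_inner_smul_left]
    rw [r1, r2, r3, r4]
    field_simp
    ring
  rw [exp] at F1
  -- norm expansions for the goal
  have g1 : ‖lk1 - ls‖ ^ 2 = ‖lk - ls‖ ^ 2 - 2 * ⟪lk - ls, lk - lk1⟫ + ‖lk - lk1‖ ^ 2 := by
    rw [show lk1 - ls = (lk - ls) - (lk - lk1) by abel]
    exact norm_sub_sq_real _ _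
  have g2 : ‖xk1 - xs‖ ^ 2 = ‖xk - xs‖ ^ 2 - 2 * ⟪xk - xs, xk - xk1⟫ + ‖xk - xk1‖ ^ 2 := by
    rw [show xk1 - xs = (xk - xs) - (xk - xk1) by abel]
    exact norm_sub_sq_real _ _
  have final : (1 / β) * (⟪lk - ls, lk - lk1⟫ - ‖lk - lk1‖ ^ 2)
      + β * (⟪xk - xs, xk - xk1⟫ - ‖xk - xk1‖ ^ 2) ≥ 0 := by linarith
  rw [g1, g2]
  ring_nf
  ring_nf at final
  linarith
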